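/- arXiv:2210.02301 — 3 statements merged into one kernel-verified Lean document; each statement's English description precedes it below -/
import Mathlib

section
/- Suppose nonnegative reals x_0, x_1, ..., x_m satisfy Σ_{t=0}^m t·x_t ≤ A and Σ_{t=0}^m x_t² ≤ B for some positive reals A, B. Then Σ_{t=0}^m x_t ≤ ((B + 2rA + s²·(s/r + 1))/(2s)) for any positive reals r, s; in particular, choosing r, s appropriately, Σ_{t=0}^m x_t = O((A·B)^{1/3}). -/
/-- If nonnegative reals `x_0, …, x_m` satisfy `∑ t x_t ≤ A` and `∑ x_t² ≤ B`
with `A, B > 0`, then for all `r, s > 0`,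
`∑ x_t ≤ (B + 2rA + s³/r + s²)/(2s)`. -/
theorem stmt_11 (m : ℕ) (x : ℕ → ℝ) (hx : ∀ t, 0 ≤ x t) (A B : ℝ)
    (hA : 0 < A) (hB : 0 < B)
    (h₁ : ∑ t ∈ Finset.range (m + 1), (t : ℝ) * x t ≤ A)
    (h₂ : ∑ t ∈ Finset.range (m + 1), (x t) ^ 2 ≤ B)
    (r s : ℝ) (hr : 0 < r) (hs : 0 < s) :
    ∑ t ∈ Finset.range (m + 1), x t ≤ (B + 2 * r * A + s ^ 3 / r + s ^ 2) / (2 * s) := by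
  rw [le_div_iff₀ (by positivity)]
  set n := Nat.floor (s / r) + 1 with hn
  have key : ∀ t ∈ Finset.range (m + 1),
      x t * (2 * s) ≤ x t ^ 2 + 2 * r * ((t : ℝ) * x t) + (max (s - r * t) 0) ^ 2 := by
    intro t _
    rcases le_or_gt (s - r * t) 0 with h | h
    · rw [max_eq_right h]
      have := mul_nonneg (neg_nonneg.mpr h) (hx t)
      nlinarith [sq_nonneg (x t)]
    · rw [max_eq_left h.le]
      nlinarith [sq_nonneg (x t - (s - r * t))]
  have hsum := Finset.sum_le_sum key
  rw [← Finset.sum_mul, Finset.sum_add_distrib, Finset.sum_add_distrib,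
    ← Finset.mul_sum] at hsum
  have hc : ∑ t ∈ Finset.range (m + 1), (max (s - r * t) 0) ^ 2 ≤ s ^ 3 / r + s ^ 2 := by
    have h1 : ∀ t ∈ Finset.range (m + 1),
        (max (s - r * t) 0) ^ 2 ≤ (if t < n then s ^ 2 else 0) := by
      intro t _
      by_cases ht : t < n
      · simp only [ht, if_true]
        have h2 : max (s - r * t) 0 ≤ s := by
          apply max_le _ hs.le
          nlinarith [Nat.cast_nonneg (α := ℝ) t]
        nlinarith [le_max_right (s - r * t) 0]
      · simp only [ht, if_false]
        push_neg at ht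
        have h3 : s / r < (t : ℝ) := by
          have : Nat.floor (s / r) < t := by omega
          exact (Nat.floor_lt (by positivity)).mp this
        have h4 : s - r * t ≤ 0 := by
          rw [div_lt_iff₀ hr] at h3
          nlinarith
        rw [max_eq_right h4]
        simp
    have h5 := Finset.sum_le_sum h1
    have h6 : ∑ t ∈ Finset.range (m + 1), (if t < n then s ^ 2 else 0 : ℝ)
        ≤ (n : ℝ) * s ^ 2 := by
      rw [Finset.sum_ite, Finset.sum_const_zero, add_zero]
      simp only [Finset.sum_const, nsmul_eq_mul]
      gcongr
      calc ((Finset.range (m + 1)).filter (· < n)).card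
            ≤ (Finset.range n).card := by
              apply Finset.card_le_card
              intro t ht
              simp only [Finset.mem_filter, Finset.mem_range] at ht ⊢
              exact ht.2
          _ = n := Finset.card_range n
    have h7 : (n : ℝ) ≤ s / r + 1 := by
      rw [hn]
      push_cast
      have := Nat.floor_le (show (0:ℝ) ≤ s / r by positivity)
      linarith
    have h8 : (n : ℝ) * s ^ 2 ≤ (s / r + 1) * s ^ 2 := by nlinarith
    calc ∑ t ∈ Finset.range (m + 1), (max (s - r * t) 0) ^ 2
        ≤ (n : ℝ) * s ^ 2 := h5.trans h6
      _ ≤ (s / r + 1) * s ^ 2 := h8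
      _ = s ^ 3 / r + s ^ 2 := by ring
  have hA2 : 2 * r * ∑ t ∈ Finset.range (m + 1), (t : ℝ) * x t ≤ 2 * r * A := by
    nlinarith
  linarith
end

section
/- Let X be a finite set, ℓ ≥ 3 an integer, and for each t = (t_1,...,t_{ℓ−2}) ∈ X ⊆ ℕ^{ℓ−2} let x_t ≥ 0 be a real. Suppose r_1,...,r_{ℓ−2} > 0 and s > 0 are reals. Then B + 2Σ_i r_i A_i − 2s·F ≥ −s²·Π_{i=1}^{ℓ−2}(s/r_i + 1), where F = Σ_t x_t, A_i = Σ_t t_i x_t, and B = Σ_t x_t². -/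
/-- Completing-the-square estimate: for a finite `X ⊆ ℕ^{ℓ−2}`, nonnegative weights
`x_t` (`t ∈ X`), positive reals `r_1, …, r_{ℓ−2}` and `s > 0`, with
`F = ∑_t x_t`, `A_i = ∑_t t_i x_t`, `B = ∑_t x_t²`, one has
`B + 2 ∑_i r_i A_i − 2 s F ≥ −s² ∏_i (s/r_i + 1)`. -/
theorem stmt_12 (ℓ : ℕ) (hℓ : 3 ≤ ℓ) (X : Finset (Fin (ℓ - 2) → ℕ))
    (x : (Fin (ℓ - 2) → ℕ) → ℝ) (hx : ∀ t ∈ X, 0 ≤ x t)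
    (r : Fin (ℓ - 2) → ℝ) (hr : ∀ i, 0 < r i) (s : ℝ) (hs : 0 < s) :
    -(s ^ 2) * ∏ i, (s / r i + 1) ≤
      (∑ t ∈ X, (x t) ^ 2)
        + 2 * ∑ i, r i * (∑ t ∈ X, (t i : ℝ) * x t)
        - 2 * s * ∑ t ∈ X, x t := by
  set c : (Fin (ℓ - 2) → ℕ) → ℝ := fun t => s - ∑ i, r i * (t i : ℝ) with hc
  have key : (∑ t ∈ X, (x t) ^ 2)
        + 2 * ∑ i, r i * (∑ t ∈ X, (t i : ℝ) * x t)
        - 2 * s * ∑ t ∈ X, x t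
      = ∑ t ∈ X, ((x t) ^ 2 - 2 * c t * x t) := by
    have h2 : ∑ i, r i * ∑ t ∈ X, (t i : ℝ) * x t
        = ∑ t ∈ X, (∑ i, r i * (t i : ℝ)) * x t := by
      simp only [Finset.mul_sum, Finset.sum_mul]
      rw [Finset.sum_comm]
      exact Finset.sum_congr rfl fun t _ => Finset.sum_congr rfl fun i _ => by ring
    rw [h2, Finset.mul_sum, Finset.mul_sum, ← Finset.sum_add_distrib,
      ← Finset.sum_sub_distrib]
    exact Finset.sum_congr rfl fun t _ => by simp only [hc]; ring
  rw [key]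
  set S : Finset (Fin (ℓ - 2) → ℕ) := X.filter (fun t => 0 ≤ c t) with hS
  have step1 : -∑ t ∈ S, (c t) ^ 2 ≤ ∑ t ∈ X, ((x t) ^ 2 - 2 * c t * x t) := by
    have hsplit := Finset.sum_filter_add_sum_filter_not X (fun t => 0 ≤ c t)
      (fun t => (x t) ^ 2 - 2 * c t * x t)
    rw [← hsplit]
    have h1 : -∑ t ∈ S, (c t) ^ 2 ≤ ∑ t ∈ S, ((x t) ^ 2 - 2 * c t * x t) := by
      rw [← Finset.sum_neg_distrib]
      apply Finset.sum_le_sum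
      intro t ht
      nlinarith [sq_nonneg (x t - c t)]
    have h2 : 0 ≤ ∑ t ∈ X.filter (fun t => ¬ 0 ≤ c t), ((x t) ^ 2 - 2 * c t * x t) := by
      apply Finset.sum_nonneg
      intro t ht
      rw [Finset.mem_filter] at ht
      have hxt := hx t ht.1
      have hct : c t < 0 := lt_of_not_ge ht.2
      nlinarith
    linarith
  have step2 : ∑ t ∈ S, (c t) ^ 2 ≤ (S.card : ℝ) * s ^ 2 := by
    calc ∑ t ∈ S, (c t) ^ 2 ≤ ∑ _t ∈ S, s ^ 2 := by
          apply Finset.sum_le_sum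
          intro t ht
          rw [Finset.mem_filter] at ht
          have h1 : 0 ≤ c t := ht.2
          have h2 : c t ≤ s := by
            have : (0:ℝ) ≤ ∑ i, r i * (t i : ℝ) :=
              Finset.sum_nonneg fun i _ => mul_nonneg (hr i).le (Nat.cast_nonneg _)
            simp only [hc]; linarith
          exact pow_le_pow_left₀ h1 h2 2
      _ = (S.card : ℝ) * s ^ 2 := by rw [Finset.sum_const, nsmul_eq_mul]
  have step3 : (S.card : ℝ) ≤ ∏ i, (s / r i + 1) := by
    have hsub : S ⊆ Fintype.piFinset (fun i => Finset.range (⌊s / r i⌋₊ + 1)) := by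
      intro t ht
      rw [Finset.mem_filter] at ht
      rw [Fintype.mem_piFinset]
      intro i
      rw [Finset.mem_range, Nat.lt_succ_iff]
      apply Nat.le_floor
      have hle : r i * (t i : ℝ) ≤ ∑ j, r j * (t j : ℝ) :=
        Finset.single_le_sum (f := fun j => r j * (t j : ℝ))
          (fun j _ => mul_nonneg (hr j).le (Nat.cast_nonneg _)) (Finset.mem_univ i)
      have hsum : ∑ j, r j * (t j : ℝ) ≤ s := by
        have h := ht.2; simp only [hc] at h; linarith
      rw [le_div_iff₀ (hr i)]
      nlinarith [hr i]
    have hcard : S.card ≤ ∏ i, (⌊s / r i⌋₊ + 1) := by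
      have h := Finset.card_le_card hsub
      simpa [Fintype.card_piFinset] using h
    calc (S.card : ℝ) ≤ ∏ i, ((⌊s / r i⌋₊ : ℝ) + 1) := by
          exact_mod_cast hcard
      _ ≤ ∏ i, (s / r i + 1) := by
          apply Finset.prod_le_prod
          · intro i _
            have : (0:ℝ) ≤ (⌊s / r i⌋₊ : ℝ) := Nat.cast_nonneg _
            linarith
          · intro i _
            have h := Nat.floor_le (div_pos hs (hr i)).le
            linarith
  have hprod : (S.card : ℝ) * s ^ 2 ≤ s ^ 2 * ∏ i, (s / r i + 1) := by
    rw [mul_comm]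
    exact mul_le_mul_of_nonneg_left step3 (by positivity)
  linarith
end

section
/- For every positive integer k, the number of partitions p(k) satisfies p(k) ≥ e^{2√k} for all sufficiently large k. -/
/-!
Encode a partition of `M` into parts at most `k` by its multiplicity vector `f`, and let `F i` be
its tail sums (the conjugate partition, padded with zeros to `k` entries). For two such partitions
`f` of `M` and `g` of `L`, the `k` numbers `F i + (k - i)` are distinct parts, and the `k` numbers
`G i + 1` taken twice each are further parts; together they form a partition of
`n = M + k(k+1)/2 + 2(L + k)`. It determines `f` and `g`, since a part has odd multiplicity
exactly when it comes from `f`. So `p(n) ≥ q_k(M) q_k(L)`, and comparing the recursion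
`q_{k+1}(M) ≥ ∑_t q_k(M - (k+1)t)` with `∫ x^(k-1)` gives `q_k(M) ≥ (M-k)^(k-1) / ((k-1)! k!)`.
With `k ≈ √n / 2`, `M ≈ 3n/8`, `L ≈ n/4` and Stirling's bound `k! ≤ e √k (k/e)^k`, the product is
about `(3e⁴/2)^k = e^(4.4… k)`, which beats `e^(2√n) ≈ e^(4k)`.
-/

open Finset Nat Real Filter Asymptotics

lemma Antitone.eq_of_map_univ_eq {α : Type*} [PartialOrder α] {k : ℕ} {c c' : Fin k → α}
    (hc : Antitone c) (hc' : Antitone c') (h : univ.val.map c = univ.val.map c') : c = c' := by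
  rw [Fin.univ_val_map, Fin.univ_val_map] at h
  exact List.ofFn_injective
    ((Multiset.coe_eq_coe.1 h).eq_of_sortedGE hc.sortedGE_ofFn hc'.sortedGE_ofFn)

lemma Multiset.eq_and_eq_of_add_two_nsmul_eq {α : Type*} {s t u v : Multiset α} (hs : s.Nodup)
    (ht : t.Nodup) (h : s + 2 • u = t + 2 • v) : s = t ∧ u = v := by
  classical
  have hcount (a : α) := congrArg (Multiset.count a) h
  simp only [Multiset.count_add, Multiset.count_nsmul] at hcount
  have hs₁ (a : α) := Multiset.nodup_iff_count_le_one.1 hs a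
  have ht₁ (a : α) := Multiset.nodup_iff_count_le_one.1 ht a
  constructor <;> ext a <;> have := hcount a <;> have := hs₁ a <;> have := ht₁ a <;> omega

lemma Fin.sum_univ_tsub_val (k : ℕ) : ∑ i : Fin k, (k - i) = k * (k + 1) / 2 := by
  rw [Fin.sum_univ_eq_sum_range (fun i => k - i), ← sum_range_reflect,
    show k * (k + 1) = (k + 1) * (k + 1 - 1) by simp [mul_comm], ← sum_range_id, sum_range_succ']
  exact sum_congr rfl fun j hj => by have := mem_range.1 hj; omega

namespace PartitionLowerBound

variable {k : ℕ}

/-- Multiplicity vectors of the partitions of `M` into parts at most `k`: `e i` is the number of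
parts equal to `i + 1`. -/
def multiplicities (k M : ℕ) : Finset (Fin k → ℕ) :=
  {e ∈ Fintype.piFinset fun _ => range (M + 1) | ∑ i : Fin k, ((i : ℕ) + 1) * e i = M}

lemma mem_multiplicities {M : ℕ} {e : Fin k → ℕ} :
    e ∈ multiplicities k M ↔ ∑ i : Fin k, ((i : ℕ) + 1) * e i = M := by
  refine ⟨fun h => (mem_filter.1 h).2, fun h => mem_filter.2 ⟨?_, h⟩⟩
  refine Fintype.mem_piFinset.2 fun i => mem_range.2 (Nat.lt_succ_of_le ?_)
  calc e i ≤ ((i : ℕ) + 1) * e i := Nat.le_mul_of_pos_left _ i.1.succ_pos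
    _ ≤ M := h ▸ single_le_sum (f := fun j : Fin k => ((j : ℕ) + 1) * e j)
      (fun _ _ => Nat.zero_le _) (mem_univ i)

def tailSum (f : Fin k → ℕ) (i : ℕ) : ℕ := ∑ j ∈ univ.filter fun j : Fin k => i ≤ (j : ℕ), f j

lemma tailSum_eq_zero (f : Fin k → ℕ) {i : ℕ} (hi : k ≤ i) : tailSum f i = 0 :=
  sum_eq_zero fun j hj => absurd (mem_filter.1 hj).2 (by omega)

lemma tailSum_eq_add (f : Fin k → ℕ) (i : Fin k) : tailSum f i = f i + tailSum f (i + 1) := by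
  rw [tailSum, ← add_sum_erase _ _ (mem_filter.2 ⟨mem_univ i, le_refl (i : ℕ)⟩), tailSum]
  congr 2
  ext j
  simp only [mem_erase, mem_filter, mem_univ, true_and, ne_eq, Fin.ext_iff]
  omega

lemma tailSum_antitone (f : Fin k → ℕ) : Antitone (tailSum f) := fun i i' h =>
  sum_le_sum_of_subset fun j hj => by
    simp only [mem_filter, mem_univ, true_and] at hj ⊢
    omega

lemma sum_tailSum (f : Fin k → ℕ) :
    ∑ i : Fin k, tailSum f i = ∑ j : Fin k, ((j : ℕ) + 1) * f j := by
  simp only [tailSum, sum_filter]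
  rw [sum_comm]
  refine sum_congr rfl fun j _ => ?_
  rw [← sum_filter, sum_const, smul_eq_mul]
  have hIic : univ.filter (fun i : Fin k => (i : ℕ) ≤ j) = Iic j := by
    ext i
    simp only [mem_filter, mem_univ, true_and, mem_Iic, Fin.le_iff_val_le_val]
  rw [hIic, Fin.card_Iic]

lemma eq_of_tailSum_eq {f f' : Fin k → ℕ} (h : ∀ i : Fin k, tailSum f i = tailSum f' i) :
    f = f' := by
  have h' (i : ℕ) : tailSum f i = tailSum f' i :=
    if hi : i < k then h ⟨i, hi⟩
    else by rw [tailSum_eq_zero f (not_lt.1 hi), tailSum_eq_zero f' (not_lt.1 hi)]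
  funext i
  have := tailSum_eq_add f i
  have := tailSum_eq_add f' i
  rw [h', h'] at *
  omega

lemma strictAnti_tailSum_add_tsub (f : Fin k → ℕ) :
    StrictAnti fun i : Fin k => tailSum f i + (k - i) := fun i j h => by
  dsimp only
  have := tailSum_antitone f (Fin.le_def.1 h.le)
  have := j.2
  have : (i : ℕ) < j := h
  omega

lemma antitone_tailSum_add_one (g : Fin k → ℕ) :
    Antitone fun i : Fin k => tailSum g i + 1 := fun _ _ h =>
  Nat.add_le_add_right (tailSum_antitone g (Fin.le_def.1 h)) 1

def distinctParts (f : Fin k → ℕ) : Multiset ℕ :=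
  univ.val.map fun i : Fin k => tailSum f i + (k - i)

def shiftedParts (g : Fin k → ℕ) : Multiset ℕ :=
  univ.val.map fun i : Fin k => tailSum g i + 1

lemma distinctParts_nodup (f : Fin k → ℕ) : (distinctParts f).Nodup :=
  univ.nodup.map (strictAnti_tailSum_add_tsub f).injective

lemma distinctParts_injective : Function.Injective (distinctParts (k := k)) := fun f f' h =>
  eq_of_tailSum_eq fun i => by
    have := congrFun ((strictAnti_tailSum_add_tsub f).antitone.eq_of_map_univ_eq
      (strictAnti_tailSum_add_tsub f').antitone h) i
    omega

lemma shiftedParts_injective : Function.Injective (shiftedParts (k := k)) := fun g g' h =>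
  eq_of_tailSum_eq fun i => by
    have := congrFun ((antitone_tailSum_add_one g).eq_of_map_univ_eq
      (antitone_tailSum_add_one g') h) i
    omega

lemma sum_distinctParts {M : ℕ} {f : Fin k → ℕ} (hf : f ∈ multiplicities k M) :
    (distinctParts f).sum = M + k * (k + 1) / 2 := by
  rw [distinctParts, ← sum_eq_multiset_sum, sum_add_distrib, sum_tailSum, mem_multiplicities.1 hf,
    Fin.sum_univ_tsub_val]

lemma sum_shiftedParts {L : ℕ} {g : Fin k → ℕ} (hg : g ∈ multiplicities k L) :
    (shiftedParts g).sum = L + k := by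
  rw [shiftedParts, ← sum_eq_multiset_sum, sum_add_distrib, sum_tailSum, mem_multiplicities.1 hg]
  simp

lemma card_mul_card_le_card_partition (k M L : ℕ) :
    #(multiplicities k M) * #(multiplicities k L) ≤
      Fintype.card (Nat.Partition (M + k * (k + 1) / 2 + 2 * (L + k))) := by
  let θ : multiplicities k M × multiplicities k L →
      Nat.Partition (M + k * (k + 1) / 2 + 2 * (L + k)) := fun p =>
    { parts := distinctParts p.1.1 + 2 • shiftedParts p.2.1
      parts_pos := fun hx => by
        simp only [distinctParts, shiftedParts, Multiset.mem_add, Multiset.mem_nsmul,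
          Multiset.mem_map] at hx
        omega
      parts_sum := by
        rw [Multiset.sum_add, Multiset.sum_nsmul, sum_distinctParts p.1.2, sum_shiftedParts p.2.2,
          smul_eq_mul] }
  have hθ : Function.Injective θ := fun p q h => by
    obtain ⟨h₁, h₂⟩ := Multiset.eq_and_eq_of_add_two_nsmul_eq (distinctParts_nodup _)
      (distinctParts_nodup _) (congrArg Nat.Partition.parts h)
    exact Prod.ext (Subtype.ext (distinctParts_injective h₁))
      (Subtype.ext (shiftedParts_injective h₂))
  simpa using Fintype.card_le_of_injective θ hθ

lemma pow_succ_le_tsub_pow_succ_add (A d p : ℕ) :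
    A ^ (p + 1) ≤ (A - d) ^ (p + 1) + (p + 1) * d * A ^ p := by
  rcases le_or_gt A d with hA | hA
  · calc A ^ (p + 1) = A * A ^ p := by ring
      _ ≤ (p + 1) * d * A ^ p :=
        Nat.mul_le_mul_right _ (hA.trans (Nat.le_mul_of_pos_left _ p.succ_pos))
      _ ≤ _ := Nat.le_add_left _ _
  · obtain ⟨B, rfl⟩ : ∃ B, A = d + B := ⟨A - d, by omega⟩
    have hterm : ∀ i ∈ range (p + 1), (d + B) ^ i * B ^ (p + 1 - 1 - i) ≤ (d + B) ^ p :=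
      fun i hi => calc
        (d + B) ^ i * B ^ (p + 1 - 1 - i) ≤ (d + B) ^ i * (d + B) ^ (p - i) :=
          Nat.mul_le_mul_left _ (Nat.pow_le_pow_left (Nat.le_add_left _ _) _)
        _ = (d + B) ^ p := by rw [← pow_add]; congr 1; have := mem_range.1 hi; omega
    calc (d + B) ^ (p + 1)
        = (∑ i ∈ range (p + 1), (d + B) ^ i * B ^ (p + 1 - 1 - i)) * d + B ^ (p + 1) :=
          (geom_sum₂_mul_add d B (p + 1)).symm
      _ ≤ (p + 1) * (d + B) ^ p * d + B ^ (p + 1) := by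
          gcongr
          simpa using sum_le_card_nsmul _ _ _ hterm
      _ = _ := by rw [Nat.add_sub_cancel_left]; ring

lemma pow_succ_le_tsub_pow_succ_add_sum (A d p T : ℕ) :
    A ^ (p + 1) ≤ (A - d * T) ^ (p + 1) + (p + 1) * d * ∑ t ∈ range T, (A - d * t) ^ p := by
  induction T with
  | zero => simp
  | succ T ih =>
    have hstep := pow_succ_le_tsub_pow_succ_add (A - d * T) d p
    rw [Nat.sub_sub, ← Nat.mul_succ] at hstep
    rw [sum_range_succ]
    linarith

lemma sum_card_multiplicities_le (k M : ℕ) :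
    ∑ t ∈ range (M / (k + 1) + 1), #(multiplicities k (M - (k + 1) * t)) ≤
      #(multiplicities (k + 1) M) := by
  rw [← card_sigma]
  refine card_le_card_of_injOn (fun x => Fin.snoc x.2 x.1) (fun x hx => ?_) (fun x _ y _ h => ?_)
  · obtain ⟨ht, he⟩ := mem_sigma.1 hx
    have htM : (k + 1) * x.1 ≤ M := by
      have := Nat.mul_div_le M (k + 1)
      have := Nat.mul_le_mul_left (k + 1) (Nat.lt_succ_iff.1 (mem_range.1 ht))
      omega
    rw [mem_coe, mem_multiplicities, Fin.sum_univ_castSucc]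
    simp only [Fin.snoc_castSucc, Fin.snoc_last, Fin.val_last, Fin.val_castSucc]
    rw [mem_multiplicities.1 he]
    omega
  · obtain ⟨h₂, h₁⟩ := Fin.snoc_injective2 h
    exact Sigma.ext h₁ (heq_of_eq h₂)

lemma tsub_pow_le_card_multiplicities (k M : ℕ) :
    (M - (k + 1)) ^ k ≤ k ! * (k + 1)! * #(multiplicities (k + 1) M) := by
  induction k generalizing M with
  | zero =>
    simpa using card_pos.2 ⟨fun _ => M, mem_multiplicities.2 (by simp)⟩
  | succ k ih =>
    have hT : M - (k + 1) ≤ (k + 2) * (M / (k + 2) + 1) := by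
      have := Nat.div_add_mod M (k + 2)
      have := Nat.mod_lt M (show 0 < k + 2 by omega)
      rw [Nat.mul_succ]
      omega
    have hterm : ∀ t ∈ range (M / (k + 2) + 1), (M - (k + 1) - (k + 2) * t) ^ k ≤
        k ! * (k + 1)! * #(multiplicities (k + 1) (M - (k + 2) * t)) := fun t _ => by
      rw [show M - (k + 1) - (k + 2) * t = M - (k + 2) * t - (k + 1) by omega]
      exact ih _
    calc (M - (k + 2)) ^ (k + 1)
        ≤ (M - (k + 1)) ^ (k + 1) := Nat.pow_le_pow_left (by omega) _
      _ ≤ (k + 1) * (k + 2) * ∑ t ∈ range (M / (k + 2) + 1), (M - (k + 1) - (k + 2) * t) ^ k := by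
          simpa [Nat.sub_eq_zero_of_le hT] using
            pow_succ_le_tsub_pow_succ_add_sum (M - (k + 1)) (k + 2) k (M / (k + 2) + 1)
      _ ≤ (k + 1) * (k + 2) * (k ! * (k + 1)! *
            ∑ t ∈ range (M / (k + 2) + 1), #(multiplicities (k + 1) (M - (k + 2) * t))) := by
          rw [mul_sum (range _) _ (k ! * (k + 1)!)]
          exact Nat.mul_le_mul_left _ (sum_le_sum hterm)
      _ ≤ (k + 1) * (k + 2) * (k ! * (k + 1)! * #(multiplicities (k + 2) M)) := by
          gcongr; exact sum_card_multiplicities_le (k + 1) M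
      _ = (k + 1)! * (k + 2)! * #(multiplicities (k + 2) M) := by
          simp only [factorial_succ]; ring

lemma factorial_le_exp_one_mul_sqrt_mul (n : ℕ) (hn : n ≠ 0) :
    (n ! : ℝ) ≤ exp 1 * √n * (n / exp 1) ^ n := by
  have h : Stirling.stirlingSeq n ≤ exp 1 / √2 := by
    have := Stirling.stirlingSeq'_antitone (Nat.zero_le (n - 1))
    rwa [Function.comp_apply, Function.comp_apply, Nat.succ_eq_add_one,
      Nat.sub_add_cancel (Nat.one_le_iff_ne_zero.2 hn), Stirling.stirlingSeq_one] at this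
  have hpos : 0 < √(2 * n : ℝ) * (n / exp 1) ^ n := by
    have : (0 : ℝ) < n := by exact_mod_cast Nat.pos_of_ne_zero hn
    positivity
  rw [Stirling.stirlingSeq, div_le_iff₀ hpos, Real.sqrt_mul zero_le_two] at h
  calc (n ! : ℝ) ≤ exp 1 / √2 * (√2 * √n * (n / exp 1) ^ n) := h
    _ = _ := by field_simp

lemma factorial_mul_factorial_succ_le (j : ℕ) :
    (j ! * (j + 1)! : ℝ) ≤ exp 2 * ((j + 1) / exp 1) ^ (2 * (j + 1)) := by
  have hj : (0 : ℝ) < j + 1 := by positivity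
  have h := factorial_le_exp_one_mul_sqrt_mul (j + 1) (Nat.succ_ne_zero j)
  push_cast at h
  have hsq : (((j + 1)! : ℕ) : ℝ) ^ 2 ≤ (exp 1 * √(j + 1) * ((j + 1) / exp 1) ^ (j + 1)) ^ 2 :=
    pow_le_pow_left₀ (by positivity) h 2
  rw [mul_pow, mul_pow, Real.sq_sqrt hj.le, ← pow_mul, ← Real.exp_nat_mul] at hsq
  refine le_of_mul_le_mul_left ?_ hj
  calc ((j : ℝ) + 1) * (j ! * (j + 1)!) = ((j + 1)! : ℝ) ^ 2 := by
        push_cast [Nat.factorial_succ]; ring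
    _ ≤ _ := hsq
    _ = _ := by norm_num; ring

lemma eventually_mul_succ_pow_le_pow {c : ℝ} (hc : 1 < c) (C : ℝ) (p : ℕ) :
    ∀ᶠ j : ℕ in atTop, C * ((j : ℝ) + 1) ^ p ≤ c ^ j := by
  have hc0 : 0 < c := by linarith
  have hbound := (tendsto_add_atTop_nat 1).eventually
    ((isLittleO_pow_const_const_pow_of_one_lt (R := ℝ) p hc).bound (c := ((|C| + 1) * c)⁻¹)
      (by positivity))
  filter_upwards [hbound] with j hj
  rw [Real.norm_of_nonneg (by positivity), Real.norm_of_nonneg (by positivity), pow_succ] at hj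
  push_cast at hj
  calc C * ((j : ℝ) + 1) ^ p ≤ (|C| + 1) * ((j : ℝ) + 1) ^ p :=
        mul_le_mul_of_nonneg_right (by linarith [le_abs_self C]) (by positivity)
    _ ≤ (|C| + 1) * (((|C| + 1) * c)⁻¹ * (c ^ j * c)) := by gcongr
    _ = c ^ j := by field_simp

lemma exp_two_mul_sqrt_mul_le {j : ℕ} {x c a : ℝ} (hc : 0 ≤ c)
    (hj : exp 8 * ((j : ℝ) + 1) ^ 4 ≤ c ^ j)
    (hx : x ≤ 2 * (j + 1) + 2) (ha : c * ((j : ℝ) + 1) ^ 4 ≤ a) :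
    exp (2 * x) * (j ! * (j + 1)! : ℝ) ^ 2 ≤ a ^ j := by
  calc exp (2 * x) * (j ! * (j + 1)! : ℝ) ^ 2
      ≤ exp (4 * (j + 1) + 4) * (exp 2 * ((j + 1) / exp 1) ^ (2 * (j + 1))) ^ 2 := by
        gcongr exp ?_ * ?_ ^ 2
        · linarith
        · exact factorial_mul_factorial_succ_le j
    _ = exp 8 * ((j : ℝ) + 1) ^ 4 * (((j : ℝ) + 1) ^ 4) ^ j := by
        have hexp (t : ℕ) : exp t = exp 1 ^ t := (exp_one_pow t).symm
        rw [show (4 : ℝ) * (j + 1) + 4 = ((4 * j + 8 : ℕ) : ℝ) by push_cast; ring,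
          show (2 : ℝ) = ((2 : ℕ) : ℝ) by norm_num, show (8 : ℝ) = ((8 : ℕ) : ℝ) by norm_num,
          hexp, hexp, hexp, div_pow]
        generalize (j : ℝ) + 1 = m
        field_simp
        ring
    _ ≤ c ^ j * (((j : ℝ) + 1) ^ 4) ^ j := by gcongr
    _ = (c * ((j : ℝ) + 1) ^ 4) ^ j := (mul_pow _ _ _).symm
    _ ≤ a ^ j := by gcongr

-- In the application `a ≈ 3n/8`, `b ≈ n/4`, `k ≈ √n/2`, so `a b / k⁴ → 3/2`; any constant in
-- `(1, 3/2)` would do.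
lemma five_fourths_mul_pow_four_le {n s k a b : ℕ} (hs : 40 ≤ s) (hsn : s * s ≤ n)
    (hk : 2 * k ≤ s) (ha : 3 * n ≤ 8 * a + 6 * s) (hb : n ≤ 4 * b + 4 * s + 3) :
    (5 / 4 : ℝ) * k ^ 4 ≤ a * b := by
  have hs' : (40 : ℝ) ≤ s := by exact_mod_cast hs
  have hsn' : (s : ℝ) * s ≤ n := by exact_mod_cast hsn
  have hk' : 2 * (k : ℝ) ≤ s := by exact_mod_cast hk
  have ha' : 3 * (n : ℝ) ≤ 8 * a + 6 * s := by exact_mod_cast ha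
  have hb' : (n : ℝ) ≤ 4 * b + 4 * s + 3 := by exact_mod_cast hb
  have hk4 : 16 * (k : ℝ) ^ 4 ≤ (n : ℝ) ^ 2 := by
    have h0 : 0 ≤ 2 * (k : ℝ) := by positivity
    have := pow_le_pow_left₀ (mul_nonneg h0 h0) (mul_le_mul hk' hk' h0 (by positivity)) 2
    nlinarith [this, pow_le_pow_left₀ (by positivity) hsn' 2]
  have hns : 40 * (s : ℝ) ≤ n := by nlinarith
  have hprod : (3 * (n : ℝ) - 6 * s) * (n - 4 * s - 3) ≤ (8 * a) * (4 * b) :=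
    mul_le_mul (by linarith) (by linarith) (by nlinarith) (by positivity)
  nlinarith

lemma pow_mul_pow_le_card_partition (j M L : ℕ) :
    (M - (j + 1)) ^ j * (L - (j + 1)) ^ j ≤ (j ! * (j + 1)!) ^ 2 *
      Fintype.card (Nat.Partition (M + (j + 1) * (j + 1 + 1) / 2 + 2 * (L + (j + 1)))) :=
  calc (M - (j + 1)) ^ j * (L - (j + 1)) ^ j
      ≤ (j ! * (j + 1)! * #(multiplicities (j + 1) M)) *
          (j ! * (j + 1)! * #(multiplicities (j + 1) L)) :=
        Nat.mul_le_mul (tsub_pow_le_card_multiplicities j M) (tsub_pow_le_card_multiplicities j L)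
    _ = (j ! * (j + 1)!) ^ 2 * (#(multiplicities (j + 1) M) * #(multiplicities (j + 1) L)) := by
        ring
    _ ≤ _ := Nat.mul_le_mul_left _ (card_mul_card_le_card_partition (j + 1) M L)

lemma exists_split_of_sqrt_div_two_eq {n j : ℕ} (hs : 40 ≤ Nat.sqrt n)
    (hj : Nat.sqrt n / 2 = j + 1) :
    ∃ M L : ℕ, M + (j + 1) * (j + 1 + 1) / 2 + 2 * (L + (j + 1)) = n ∧
      (5 / 4 : ℝ) * ((j : ℝ) + 1) ^ 4 ≤ ((M - (j + 1) : ℕ) : ℝ) * ((L - (j + 1) : ℕ) : ℝ) := by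
  have hsn := Nat.sqrt_le n
  have hjn : 4 * ((j + 1) * (j + 1)) ≤ n := calc
    4 * ((j + 1) * (j + 1)) = (2 * (j + 1)) * (2 * (j + 1)) := by ring
    _ ≤ Nat.sqrt n * Nat.sqrt n := Nat.mul_le_mul (by omega) (by omega)
    _ ≤ n := hsn
  have htri : (j + 1) * (j + 1 + 1) = (j + 1) * (j + 1) + (j + 1) := by ring
  have hsq := Nat.le_mul_self (j + 1)
  refine ⟨n - (j + 1) * (j + 1 + 1) / 2 - 2 * (n / 4), n / 4 - (j + 1), by omega, ?_⟩
  exact_mod_cast five_fourths_mul_pow_four_le hs hsn (k := j + 1) (by omega) (by omega) (by omega)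

lemma exp_two_mul_sqrt_le_card_partition {n j M L : ℕ}
    (hj : exp 8 * ((j : ℝ) + 1) ^ 4 ≤ (5 / 4) ^ j) (hn : √(n : ℝ) ≤ 2 * (j + 1) + 2)
    (hsplit : M + (j + 1) * (j + 1 + 1) / 2 + 2 * (L + (j + 1)) = n)
    (hab : (5 / 4 : ℝ) * ((j : ℝ) + 1) ^ 4 ≤ ((M - (j + 1) : ℕ) : ℝ) * ((L - (j + 1) : ℕ) : ℝ)) :
    exp (2 * √(n : ℝ)) ≤ Fintype.card (Nat.Partition n) := by
  have hcount := pow_mul_pow_le_card_partition j M L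
  rw [hsplit, ← mul_pow] at hcount
  refine le_of_mul_le_mul_right ?_ (by positivity : (0 : ℝ) < (j ! * (j + 1)! : ℝ) ^ 2)
  calc exp (2 * √(n : ℝ)) * (j ! * (j + 1)! : ℝ) ^ 2
      ≤ (((M - (j + 1) : ℕ) : ℝ) * ((L - (j + 1) : ℕ) : ℝ)) ^ j :=
        exp_two_mul_sqrt_mul_le (by norm_num) hj hn hab
    _ ≤ (((j ! * (j + 1)!) ^ 2 * Fintype.card (Nat.Partition n) : ℕ) : ℝ) := by
        exact_mod_cast hcount
    _ = _ := by push_cast; ring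

end PartitionLowerBound

open PartitionLowerBound in
/-- For sufficiently large `k`, the number of partitions of `k` satisfies
`p(k) ≥ e^{2√k}`. -/
theorem stmt_14 :
    ∃ N : ℕ, ∀ k : ℕ, N ≤ k →
      Real.exp (2 * Real.sqrt k) ≤ Fintype.card (Nat.Partition k) := by
  obtain ⟨J, hJ⟩ := eventually_atTop.1
    (eventually_mul_succ_pow_le_pow (by norm_num : (1 : ℝ) < 5 / 4) (exp 8) 4)
  refine ⟨(2 * J + 40) ^ 2, fun n hn => ?_⟩
  have hs : 2 * J + 40 ≤ Nat.sqrt n := Nat.le_sqrt'.2 hn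
  obtain ⟨j, hj⟩ : ∃ j, Nat.sqrt n / 2 = j + 1 := ⟨Nat.sqrt n / 2 - 1, by omega⟩
  obtain ⟨M, L, hsplit, hab⟩ := exists_split_of_sqrt_div_two_eq (by omega) hj
  refine exp_two_mul_sqrt_le_card_partition (hJ j (by omega)) ?_ hsplit hab
  have hsqrt := Real.real_sqrt_lt_nat_sqrt_succ (a := n)
  have : (Nat.sqrt n : ℝ) ≤ 2 * ((j : ℝ) + 1) + 1 := by
    exact_mod_cast (by omega : Nat.sqrt n ≤ 2 * (j + 1) + 1)
  linarith
end
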